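/- arXiv:1910.01513 — 2 statements merged into one kernel-verified Lean document; each statement's English description precedes it below -/
import Mathlib

section
/- Form-invariance of QP systems under QMT: let F be the QP map with matrices (A, B, λ) and let C be an invertible n×n real matrix. Then Φ_C⁻¹ ∘ F ∘ Φ_C equals the QP map with matrices (A', B', λ') = (C⁻¹·A, B·C, C⁻¹·λ). That is, performing the substitution x = Φ_C(y) transforms the QP system with data (A,B,λ) into the QP system with data (C⁻¹A, BC, C⁻¹λ). -/
/-!
On positive vectors, taking logarithms turns `Φ_M` into the linear map `M` and the QP map into
`x ↦ log x + λ + A Φ_B(x)`. Since also `Φ_B ∘ Φ_C = Φ_{BC}`, conjugating by `Φ_C` reduces to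
`D (C u + λ + A v) = u + Dλ + (DA) v` for any left inverse `D` of `C`.
-/

open Matrix Real

namespace QuasiMonomial

variable {ι κ μ : Type*}

noncomputable def qmt [Fintype ι] (M : Matrix κ ι ℝ) (y : ι → ℝ) : κ → ℝ :=
  fun i => ∏ j, y j ^ M i j

noncomputable def qpMap [Fintype ι] [Fintype μ] (A : Matrix ι μ ℝ) (B : Matrix μ ι ℝ)
    (lam x : ι → ℝ) : ι → ℝ :=
  fun i => x i * exp (lam i + (A *ᵥ qmt B x) i)

lemma eq_of_log_comp_eq {x y : ι → ℝ} (hx : ∀ i, 0 < x i) (hy : ∀ i, 0 < y i)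
    (h : log ∘ x = log ∘ y) : x = y :=
  funext fun i => log_injOn_pos (hx i) (hy i) (congrFun h i)

lemma qmt_pos [Fintype ι] (M : Matrix κ ι ℝ) {y : ι → ℝ} (hy : ∀ j, 0 < y j) (i : κ) :
    0 < qmt M y i :=
  Finset.prod_pos fun j _ => rpow_pos_of_pos (hy j) _

lemma log_comp_qmt [Fintype ι] (M : Matrix κ ι ℝ) {y : ι → ℝ} (hy : ∀ j, 0 < y j) :
    log ∘ qmt M y = M *ᵥ (log ∘ y) := by
  funext i
  simp only [Function.comp_apply, qmt, mulVec, dotProduct]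
  rw [log_prod fun j _ => (rpow_pos_of_pos (hy j) _).ne']
  exact Finset.sum_congr rfl fun j _ => log_rpow (hy j) _

lemma qmt_qmt [Fintype ι] [Fintype κ] (M : Matrix μ κ ℝ) (N : Matrix κ ι ℝ) {y : ι → ℝ}
    (hy : ∀ j, 0 < y j) :
    qmt M (qmt N y) = qmt (M * N) y :=
  eq_of_log_comp_eq (qmt_pos M (qmt_pos N hy)) (qmt_pos _ hy) <| by
    rw [log_comp_qmt M (qmt_pos N hy), log_comp_qmt N hy, log_comp_qmt _ hy, mulVec_mulVec]

lemma qpMap_pos [Fintype ι] [Fintype μ] (A : Matrix ι μ ℝ) (B : Matrix μ ι ℝ) (lam : ι → ℝ)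
    {x : ι → ℝ} (hx : ∀ i, 0 < x i) (i : ι) : 0 < qpMap A B lam x i :=
  mul_pos (hx i) (exp_pos _)

lemma log_comp_qpMap [Fintype ι] [Fintype μ] (A : Matrix ι μ ℝ) (B : Matrix μ ι ℝ) (lam : ι → ℝ)
    {x : ι → ℝ} (hx : ∀ i, 0 < x i) : log ∘ qpMap A B lam x = log ∘ x + lam + A *ᵥ qmt B x := by
  funext i
  simp only [Function.comp_apply, qpMap, Pi.add_apply]
  rw [log_mul (hx i).ne' (exp_pos _).ne', log_exp, add_assoc]

theorem qmt_qpMap_qmt [Fintype ι] [Fintype κ] [Fintype μ] [DecidableEq κ] (A : Matrix ι μ ℝ)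
    (B : Matrix μ ι ℝ) (lam : ι → ℝ) {C : Matrix ι κ ℝ} {D : Matrix κ ι ℝ}
    (hDC : D * C = 1) {y : κ → ℝ} (hy : ∀ i, 0 < y i) :
    qmt D (qpMap A B lam (qmt C y)) = qpMap (D * A) (B * C) (D *ᵥ lam) y := by
  have hCy := qmt_pos C hy
  refine eq_of_log_comp_eq (qmt_pos D (qpMap_pos A B lam hCy)) (qpMap_pos _ _ _ hy) ?_
  rw [log_comp_qmt D (qpMap_pos A B lam hCy), log_comp_qpMap A B lam hCy, log_comp_qpMap _ _ _ hy,
    log_comp_qmt C hy, qmt_qmt B C hy, mulVec_add, mulVec_add, mulVec_mulVec, mulVec_mulVec, hDC,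
    one_mulVec]

end QuasiMonomial

/-- Form-invariance of QP systems under quasimonomial transformations:
`Φ_{C⁻¹} ∘ F ∘ Φ_C` is the QP map with data `(C⁻¹A, BC, C⁻¹λ)`. -/
theorem qp_form_invariance (n : ℕ) (A B C : Matrix (Fin n) (Fin n) ℝ)
    (lam : Fin n → ℝ) (hC : IsUnit C.det) :
    let Phi : Matrix (Fin n) (Fin n) ℝ → (Fin n → ℝ) → (Fin n → ℝ) :=
      fun M y i => ∏ j, y j ^ M i j
    let F : (Fin n → ℝ) → (Fin n → ℝ) :=
      fun x i => x i * Real.exp (lam i + ∑ j, A i j * ∏ k, x k ^ B j k)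
    let F' : (Fin n → ℝ) → (Fin n → ℝ) :=
      fun y i => y i * Real.exp ((C⁻¹.mulVec lam) i +
        ∑ j, (C⁻¹ * A) i j * ∏ k, y k ^ (B * C) j k)
    ∀ y : Fin n → ℝ, (∀ i, 0 < y i) → Phi C⁻¹ (F (Phi C y)) = F' y := by
  intro Phi F F' y hy
  exact QuasiMonomial.qmt_qpMap_qmt A B lam (nonsing_inv_mul C hC) hy
end

section
/- Every QP system with invertible exponent matrix B is topologically conjugate to its canonical Lotka-Volterra representative: if F is the QP map with data (A, B, λ) and B is invertible, then Φ_{B⁻¹}⁻¹ ∘ F ∘ Φ_{B⁻¹} (equivalently Φ_B ∘ F ∘ Φ_{B⁻¹}) is the LV map with data (A_LV, λ_LV) = (B·A, B·λ), i.e., the QP map with matrices (B·A, I, B·λ). -/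
/-!
On the positive orthant a QMT is a linear map in logarithmic coordinates, so
`Φ_M ∘ Φ_N = Φ_{M N}` and `Φ_M (y * exp v) = Φ_M y * exp (M v)`. Hence `Φ_B ∘ Φ_{B⁻¹} = id`, the
QP map evaluated at `y = Φ_{B⁻¹} x` is `y * exp (λ + A x)`, and applying `Φ_B` gives
`x * exp (B λ + B A x)`.
-/

open Matrix Finset

noncomputable section

variable {ι κ ν : Type*} [Fintype ι] [Fintype ν]

def qmt (M : Matrix κ ι ℝ) (y : ι → ℝ) : κ → ℝ :=
  fun i => ∏ j, y j ^ M i j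

theorem qmt_pos (M : Matrix κ ι ℝ) {y : ι → ℝ} (hy : ∀ j, 0 < y j) (i : κ) : 0 < qmt M y i :=
  prod_pos fun j _ => Real.rpow_pos_of_pos (hy j) _

theorem qmt_qmt (M : Matrix κ ι ℝ) (N : Matrix ι ν ℝ) {y : ν → ℝ} (hy : ∀ k, 0 < y k) :
    qmt M (qmt N y) = qmt (M * N) y := by
  funext i
  calc ∏ j, (∏ k, y k ^ N j k) ^ M i j
      = ∏ j, ∏ k, y k ^ (M i j * N j k) := by
        refine prod_congr rfl fun j _ => ?_
        rw [← Real.finsetProd_rpow _ _ fun k _ => (Real.rpow_pos_of_pos (hy k) _).le]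
        exact prod_congr rfl fun k _ => by rw [← Real.rpow_mul (hy k).le, mul_comm]
    _ = ∏ k, y k ^ (M * N) i k := by
        rw [prod_comm]
        exact prod_congr rfl fun k _ => by rw [← Real.rpow_sum_of_pos (hy k), mul_apply]

theorem qmt_one [DecidableEq ι] (y : ι → ℝ) : qmt (1 : Matrix ι ι ℝ) y = y := by
  funext i
  rw [qmt, prod_eq_single i (fun k _ hk => by rw [one_apply_ne' hk, Real.rpow_zero])
    (fun hi => absurd (mem_univ i) hi), one_apply_eq, Real.rpow_one]

theorem qmt_mul_exp (M : Matrix κ ι ℝ) {y : ι → ℝ} (hy : ∀ j, 0 ≤ y j) (v : ι → ℝ) :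
    qmt M (fun j => y j * Real.exp (v j)) = fun i => qmt M y i * Real.exp ((M *ᵥ v) i) := by
  funext i
  simp only [qmt, Real.mul_rpow (hy _) (Real.exp_pos _).le, prod_mul_distrib, ← Real.exp_mul,
    ← Real.exp_sum, mulVec, dotProduct, mul_comm (v _)]

end

/-- Every QP system with invertible exponent matrix `B` is conjugate, via the QMT of
matrix `B⁻¹`, to its canonical Lotka–Volterra representative with data `(B·A, B·λ)`. -/
theorem qp_lv_canonical_form (n : ℕ) (A B : Matrix (Fin n) (Fin n) ℝ)
    (lam : Fin n → ℝ) (hB : IsUnit B.det) :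
    let Phi : Matrix (Fin n) (Fin n) ℝ → (Fin n → ℝ) → (Fin n → ℝ) :=
      fun M y i => ∏ j, y j ^ M i j
    let F : (Fin n → ℝ) → (Fin n → ℝ) :=
      fun x i => x i * Real.exp (lam i + ∑ j, A i j * ∏ k, x k ^ B j k)
    let G : (Fin n → ℝ) → (Fin n → ℝ) :=
      fun x i => x i * Real.exp ((B.mulVec lam) i + ∑ j, (B * A) i j * x j)
    ∀ x : Fin n → ℝ, (∀ i, 0 < x i) → Phi B (F (Phi B⁻¹ x)) = G x := by
  intro Phi F G x hx
  have hround : qmt B (qmt B⁻¹ x) = x := by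
    rw [qmt_qmt _ _ hx, mul_nonsing_inv B hB, qmt_one]
  have hF : F (qmt B⁻¹ x) = fun j => qmt B⁻¹ x j * Real.exp ((lam + A *ᵥ x) j) := by
    funext j
    change _ * Real.exp (lam j + ∑ k, A j k * qmt B (qmt B⁻¹ x) k) = _
    rw [hround]
    rfl
  show qmt B (F (qmt B⁻¹ x)) = G x
  rw [hF, qmt_mul_exp _ (fun j => (qmt_pos _ hx j).le), hround, mulVec_add, mulVec_mulVec]
  rfl
end
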